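/- Let G = (V,E) be a connected finite simple graph containing no cycle of length 4, no cycle of length 5, and no cycle of length 6 (as subgraphs, not necessarily induced), with L(G) = ∅, and suppose G is not well-covered. Then the only weight function w : V → ℝ for which G is w-well-covered is the zero function; i.e., WCW(G) = {0}. -/

import Mathlib

/-!
Every edge `xy` is relating. Let `S₀` be a maximal independent set among the vertices outside
`N[x] ∪ N[y]` that have a neighbour in `N(x) ∪ N(y)`, and extend it to a maximal independent set
`S` of all vertices outside `N[x] ∪ N[y]`. A vertex of `N(x) \ N[y]` is neither of degree one nor
of degree two on a triangle, so, as there is no `C₄`, it has a neighbour outside `N[x] ∪ N[y]`;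
the absence of `C₅` and `C₆` then forces it to be dominated by `S₀`. Hence `S ∪ {y}` and,
symmetrically, `S ∪ {x}` are maximal independent sets. A relating edge forces `w x = w y`, so `w`
is constant on the connected graph `G`, and two maximal independent sets of different sizes force
that constant to be `0`.
-/

namespace WC

variable {V : Type*}

/-- A set of vertices is independent if its elements are pairwise nonadjacent. -/
def IsIndep (G : SimpleGraph V) (S : Set V) : Prop :=
  S.Pairwise fun a b => ¬ G.Adj a b

/-- A maximal independent set: independent and not properly contained in another
independent set. -/
def IsMaxIndep (G : SimpleGraph V) (S : Set V) : Prop :=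
  IsIndep G S ∧ ∀ T : Set V, IsIndep G T → S ⊆ T → T = S

/-- A maximal independent set of the subgraph of `G` induced by `A`
(equivalently, a subset of `A`, independent in `G`, maximal among such). -/
def IsMaxIndepOn (G : SimpleGraph V) (A S : Set V) : Prop :=
  S ⊆ A ∧ IsIndep G S ∧ ∀ T : Set V, T ⊆ A → IsIndep G T → S ⊆ T → T = S

/-- The weight of a set of vertices: `w(S) = Σ_{s ∈ S} w(s)`. -/
noncomputable def wsum (w : V → ℝ) (S : Set V) : ℝ := ∑ᶠ x ∈ S, w x

/-- `G` is `w`-well-covered if all maximal independent sets have the same weight. -/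
def WWC (G : SimpleGraph V) (w : V → ℝ) : Prop :=
  ∀ S T : Set V, IsMaxIndep G S → IsMaxIndep G T → wsum w S = wsum w T

/-- `G` is well-covered if all maximal independent sets have the same cardinality. -/
def WellCovered (G : SimpleGraph V) : Prop :=
  ∀ S T : Set V, IsMaxIndep G S → IsMaxIndep G T → S.ncard = T.ncard

/-- `N(S)`, the set of vertices at distance exactly 1 from `S`. -/
def nbhd (G : SimpleGraph V) (S : Set V) : Set V :=
  {x | x ∉ S ∧ ∃ s ∈ S, G.Adj x s}

/-- `N[S]`, the set of vertices at distance at most 1 from `S`. -/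
def cnbhd (G : SimpleGraph V) (S : Set V) : Set V :=
  S ∪ {x | ∃ s ∈ S, G.Adj x s}

/-- `N₂(S)`, the set of vertices at distance exactly 2 from `S`. -/
def n2 (G : SimpleGraph V) (S : Set V) : Set V :=
  {x | x ∉ cnbhd G S ∧ ∃ y ∈ nbhd G S, G.Adj x y}

/-- `S` dominates `T` if `T ⊆ N[S]`. -/
def Dominates (G : SimpleGraph V) (S T : Set V) : Prop := T ⊆ cnbhd G S

/-- `D(v) = N(v) \ N(N₂(v))`. -/
def dSet (G : SimpleGraph V) (v : V) : Set V :=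
  G.neighborSet v \ nbhd G (n2 G {v})

/-- `L(G)`: vertices of degree 1, or of degree 2 lying on a triangle. -/
def lSet (G : SimpleGraph V) : Set V :=
  {v | (G.neighborSet v).ncard = 1 ∨
    ((G.neighborSet v).ncard = 2 ∧ ∃ a b, G.Adj v a ∧ G.Adj v b ∧ G.Adj a b)}

/-- `G` contains a cycle of length `k` as a (not necessarily induced) subgraph. -/
def HasCycleLen (G : SimpleGraph V) (k : ℕ) : Prop :=
  ∃ (u : V) (p : G.Walk u u), p.IsCycle ∧ p.length = k

/-- A vertex is simplicial if its closed neighborhood induces a complete subgraph. -/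
def Simplicial (G : SimpleGraph V) (v : V) : Prop :=
  ∀ a ∈ G.neighborSet v, ∀ b ∈ G.neighborSet v, a ≠ b → G.Adj a b

/-- `B` is an induced complete bipartite subgraph of `G` on (nonempty, disjoint)
parts `BX` and `BY`. -/
def IsCompleteBipartiteOn (G : SimpleGraph V) (BX BY : Set V) : Prop :=
  BX.Nonempty ∧ BY.Nonempty ∧ Disjoint BX BY ∧ IsIndep G BX ∧ IsIndep G BY ∧
    ∀ x ∈ BX, ∀ y ∈ BY, G.Adj x y

/-- `B` (on parts `BX`, `BY`) is a generating subgraph of `G`: there is an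
independent set `S` (a witness) such that `S ∪ BX` and `S ∪ BY` are both
maximal independent sets of `G`. -/
def IsGenerating (G : SimpleGraph V) (BX BY : Set V) : Prop :=
  ∃ S : Set V, IsIndep G S ∧ IsMaxIndep G (S ∪ BX) ∧ IsMaxIndep G (S ∪ BY)

/-- The edge `xy` is relating: there is an independent set `S` such that
`S ∪ {x}` and `S ∪ {y}` are both maximal independent sets of `G`. -/
def IsRelating (G : SimpleGraph V) (x y : V) : Prop :=
  G.Adj x y ∧ ∃ S : Set V, IsIndep G S ∧ IsMaxIndep G (S ∪ {x}) ∧ IsMaxIndep G (S ∪ {y})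

end WC

namespace WC

open SimpleGraph

variable {V : Type*} {G : SimpleGraph V}

section Cycles

lemma hasCycleLen_four {a b c d : V}
    (hab : G.Adj a b) (hbc : G.Adj b c) (hcd : G.Adj c d) (hda : G.Adj d a)
    (hac : a ≠ c) (hbd : b ≠ d) : HasCycleLen G 4 := by
  refine ⟨a, .cons hab (.cons hbc (.cons hcd (.cons hda .nil))), ?_, rfl⟩
  have := hab.ne; have := hbc.ne; have := hcd.ne; have := hda.ne
  rw [Walk.isCycle_def, Walk.isTrail_def]
  refine ⟨?_, by simp, ?_⟩
  · simp; aesop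
  · simp; aesop

lemma hasCycleLen_five {a b c d e : V}
    (hab : G.Adj a b) (hbc : G.Adj b c) (hcd : G.Adj c d) (hde : G.Adj d e) (hea : G.Adj e a)
    (hac : a ≠ c) (had : a ≠ d) (hbd : b ≠ d) (hbe : b ≠ e) (hce : c ≠ e) :
    HasCycleLen G 5 := by
  refine ⟨a, .cons hab (.cons hbc (.cons hcd (.cons hde (.cons hea .nil)))), ?_, rfl⟩
  have := hab.ne; have := hbc.ne; have := hcd.ne; have := hde.ne; have := hea.ne
  rw [Walk.isCycle_def, Walk.isTrail_def]
  refine ⟨?_, by simp, ?_⟩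
  · simp; aesop
  · simp; aesop

lemma hasCycleLen_six {a b c d e f : V}
    (hab : G.Adj a b) (hbc : G.Adj b c) (hcd : G.Adj c d) (hde : G.Adj d e)
    (hef : G.Adj e f) (hfa : G.Adj f a)
    (hac : a ≠ c) (had : a ≠ d) (hae : a ≠ e) (hbd : b ≠ d) (hbe : b ≠ e)
    (hbf : b ≠ f) (hce : c ≠ e) (hcf : c ≠ f) (hdf : d ≠ f) :
    HasCycleLen G 6 := by
  refine ⟨a, .cons hab (.cons hbc (.cons hcd (.cons hde (.cons hef (.cons hfa .nil))))),
    ?_, rfl⟩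
  have := hab.ne; have := hbc.ne; have := hcd.ne; have := hde.ne; have := hef.ne
  have := hfa.ne
  rw [Walk.isCycle_def, Walk.isTrail_def]
  refine ⟨?_, by simp, ?_⟩
  · simp; aesop
  · simp; aesop

end Cycles

section IndependentSets

lemma IsIndep.insert {S : Set V} {v : V} (hS : IsIndep G S) (h : ∀ s ∈ S, ¬ G.Adj v s) :
    IsIndep G (insert v S) :=
  Set.Pairwise.insert hS fun s hs _ => ⟨h s hs, fun hsv => h s hs hsv.symm⟩

lemma isMaxIndep_of_forall_exists_adj {S : Set V} (hS : IsIndep G S)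
    (hdom : ∀ v ∉ S, ∃ s ∈ S, G.Adj v s) : IsMaxIndep G S := by
  refine ⟨hS, fun T hT hST => hST.antisymm' fun v hvT => ?_⟩
  by_contra hvS
  obtain ⟨s, hs, hvs⟩ := hdom v hvS
  exact hT hvT (hST hs) hvs.ne hvs

lemma IsMaxIndepOn.exists_adj {A S : Set V} (h : IsMaxIndepOn G A S) {v : V} (hvA : v ∈ A)
    (hvS : v ∉ S) : ∃ s ∈ S, G.Adj v s := by
  by_contra! hc
  have := h.2.2 (insert v S) (Set.insert_subset hvA h.1) (h.2.1.insert hc)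
    (Set.subset_insert _ _)
  exact hvS (this ▸ Set.mem_insert v S)

lemma exists_isMaxIndepOn_superset [Finite V] (G : SimpleGraph V) {A I : Set V} (hIA : I ⊆ A)
    (hI : IsIndep G I) : ∃ S, I ⊆ S ∧ IsMaxIndepOn G A S := by
  obtain ⟨S, ⟨hIS, hSA, hS⟩, hmax⟩ :=
    (Set.toFinite {S : Set V | I ⊆ S ∧ S ⊆ A ∧ IsIndep G S}).exists_maximalFor id _
      ⟨I, subset_rfl, hIA, hI⟩
  exact ⟨S, hIS, hSA, hS, fun T hTA hT hST =>
    (hmax ⟨hIS.trans hST, hTA, hT⟩ hST).antisymm hST⟩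

end IndependentSets

section Weights

lemma wsum_insert [Finite V] (w : V → ℝ) {S : Set V} {a : V} (ha : a ∉ S) :
    wsum w (insert a S) = w a + wsum w S :=
  finsum_mem_insert w ha S.toFinite

lemma wsum_const [Finite V] (c : ℝ) (S : Set V) : wsum (fun _ => c) S = S.ncard * c := by
  rw [wsum, finsum_mem_eq_finite_toFinset_sum _ S.toFinite, Finset.sum_const, nsmul_eq_mul,
    Set.ncard_eq_toFinset_card S S.toFinite]

lemma WWC.eq_of_isRelating [Finite V] {w : V → ℝ} (hw : WWC G w) {x y : V}
    (h : IsRelating G x y) : w x = w y := by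
  obtain ⟨hxy, S, -, hSx, hSy⟩ := h
  have hxS : x ∉ S := fun hx => hSy.1 (.inl hx) (.inr rfl) hxy.ne hxy
  have hyS : y ∉ S := fun hy => hSx.1 (.inl hy) (.inr rfl) hxy.ne' hxy.symm
  have := hw _ _ hSx hSy
  rw [Set.union_singleton, Set.union_singleton, wsum_insert w hxS, wsum_insert w hyS] at this
  linarith

lemma Preconnected.eq_of_forall_adj {α : Type*} {f : V → α} (hG : G.Preconnected)
    (hf : ∀ x y, G.Adj x y → f x = f y) (u v : V) : f u = f v := by
  obtain ⟨p⟩ := hG u v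
  induction p with
  | nil => rfl
  | cons h _ ih => exact (hf _ _ h).trans ih

lemma WWC.eq_zero_of_forall_isRelating [Finite V] {w : V → ℝ} (hw : WWC G w)
    (hconn : G.Connected) (hrel : ∀ x y, G.Adj x y → IsRelating G x y)
    (hnwc : ¬ WellCovered G) : w = 0 := by
  obtain ⟨v₀⟩ := hconn.nonempty
  have hconst : w = fun _ => w v₀ := funext fun v =>
    Preconnected.eq_of_forall_adj hconn.preconnected
      (fun x y hxy => hw.eq_of_isRelating (hrel x y hxy)) v v₀
  obtain ⟨S, T, hS, hT, hne⟩ :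
      ∃ S T, IsMaxIndep G S ∧ IsMaxIndep G T ∧ S.ncard ≠ T.ncard := by
    simpa [WellCovered] using hnwc
  have := hw S T hS hT
  rw [hconst, wsum_const, wsum_const] at this
  have hw₀ : w v₀ = 0 := (mul_eq_mul_right_iff.1 this).resolve_left (by exact_mod_cast hne)
  rw [hconst, hw₀]
  rfl

end Weights

section RelatingEdges

def exterior (G : SimpleGraph V) (x y : V) : Set V :=
  {v | v ≠ x ∧ v ≠ y ∧ ¬ G.Adj x v ∧ ¬ G.Adj y v}

def exteriorFrontier (G : SimpleGraph V) (x y : V) : Set V :=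
  {v | v ∈ exterior G x y ∧ ∃ u, (G.Adj x u ∨ G.Adj y u) ∧ G.Adj u v}

lemma exterior_comm (x y : V) : exterior G x y = exterior G y x := by
  ext v
  exact ⟨fun ⟨h₁, h₂, h₃, h₄⟩ => ⟨h₂, h₁, h₄, h₃⟩, fun ⟨h₁, h₂, h₃, h₄⟩ => ⟨h₂, h₁, h₄, h₃⟩⟩

lemma exteriorFrontier_comm (x y : V) : exteriorFrontier G x y = exteriorFrontier G y x := by
  ext v
  simp only [exteriorFrontier, exterior_comm x y, or_comm]

lemma mem_lSet_of_forall_adj (h4 : ¬ HasCycleLen G 4) {x u : V} (hxu : G.Adj x u)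
    (h : ∀ t, G.Adj u t → t = x ∨ G.Adj x t) : u ∈ lSet G := by
  by_cases hex : ∃ t, G.Adj u t ∧ t ≠ x
  · obtain ⟨t, hut, htx⟩ := hex
    have hxt := (h t hut).resolve_left htx
    -- a third neighbour `t'` of `u` would close the 4-cycle `u t x t'`
    have hN : G.neighborSet u = {x, t} := by
      ext t'
      simp only [mem_neighborSet, Set.mem_insert_iff, Set.mem_singleton_iff]
      refine ⟨fun hut' => ?_, ?_⟩
      swap
      · rintro (rfl | rfl)
        exacts [hxu.symm, hut]
      by_contra! h'
      exact h4 (hasCycleLen_four hut hxt.symm ((h t' hut').resolve_left h'.1) hut'.symm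
        hxu.ne' h'.2.symm)
    exact .inr ⟨by rw [hN, Set.ncard_pair hxt.ne], x, t, hxu.symm, hut, hxt⟩
  · push Not at hex
    have hN : G.neighborSet u = {x} := by
      ext t
      exact ⟨hex t, fun ht => ht ▸ hxu.symm⟩
    exact .inl (by rw [hN, Set.ncard_singleton])

lemma exists_adj_mem_exterior (h4 : ¬ HasCycleLen G 4) (hL : lSet G = ∅) {x y u : V}
    (hxy : G.Adj x y) (hxu : G.Adj x u) (hyu : ¬ G.Adj y u) (huy : u ≠ y) :
    ∃ t ∈ exterior G x y, G.Adj u t := by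
  by_contra! hc
  refine (hL ▸ mem_lSet_of_forall_adj h4 hxu fun t hut => ?_ : u ∈ (∅ : Set V))
  by_contra! ht
  have hty : t ≠ y := by rintro rfl; exact hyu hut.symm
  have hyt : ¬ G.Adj y t := fun hyt =>
    h4 (hasCycleLen_four hxu hut hyt.symm hxy.symm ht.1.symm huy)
  exact hc t ⟨ht.1, hty, ht.2, hyt⟩ hut

/-- If `u` had no neighbour in `S₀`, its exterior neighbour `t` would lie in the frontier, hence
be adjacent to some `s ∈ S₀`, which has a neighbour `u'` in `N(x)` or `N(y)`: this closes the
cycle `x u t s u'` or `x u t s u' y`. -/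
lemma exists_adj_of_isMaxIndepOn_exteriorFrontier (h4 : ¬ HasCycleLen G 4)
    (h5 : ¬ HasCycleLen G 5) (h6 : ¬ HasCycleLen G 6) (hL : lSet G = ∅) {x y : V}
    (hxy : G.Adj x y) {S₀ : Set V} (hS₀ : IsMaxIndepOn G (exteriorFrontier G x y) S₀) {u : V}
    (hxu : G.Adj x u) (hyu : ¬ G.Adj y u) (huy : u ≠ y) : ∃ s ∈ S₀, G.Adj u s := by
  by_contra! hc
  obtain ⟨t, ⟨htx, hty, hxt, hyt⟩, hut⟩ := exists_adj_mem_exterior h4 hL hxy hxu hyu huy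
  obtain ⟨s, hsS₀, hts⟩ :=
    hS₀.exists_adj ⟨⟨htx, hty, hxt, hyt⟩, u, .inl hxu, hut⟩ fun ht => hc t ht hut
  obtain ⟨⟨hsx, hsy, hxs, -⟩, u', hu', hu's⟩ := hS₀.1 hsS₀
  have hus : u ≠ s := by rintro rfl; exact hxs hxu
  have huu' : u ≠ u' := by rintro rfl; exact hc s hsS₀ hu's
  rcases hu' with hxu' | hyu'
  · have htu' : t ≠ u' := by rintro rfl; exact hxt hxu'
    exact h5 (hasCycleLen_five hxu hut hts hu's.symm hxu'.symm htx.symm hsx.symm hus huu' htu')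
  · have hxu' : x ≠ u' := by rintro rfl; exact hxs hu's
    have htu' : t ≠ u' := by rintro rfl; exact hyt hyu'
    exact h6 (hasCycleLen_six hxu hut hts hu's.symm hyu'.symm hxy.symm
      htx.symm hsx.symm hxu' hus huu' huy htu' hty hsy)

lemma isMaxIndep_insert_of_isMaxIndepOn_exterior (h4 : ¬ HasCycleLen G 4)
    (h5 : ¬ HasCycleLen G 5) (h6 : ¬ HasCycleLen G 6) (hL : lSet G = ∅) {x y : V}
    (hxy : G.Adj x y) {S₀ S : Set V} (hS₀ : IsMaxIndepOn G (exteriorFrontier G x y) S₀)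
    (hS : IsMaxIndepOn G (exterior G x y) S) (hsub : S₀ ⊆ S) :
    IsMaxIndep G (insert y S) := by
  refine isMaxIndep_of_forall_exists_adj (hS.2.1.insert fun s hs => (hS.1 hs).2.2.2)
    fun v hv => ?_
  have hvy : v ≠ y := fun h => hv (h ▸ Set.mem_insert v S)
  by_cases hyv : G.Adj y v
  · exact ⟨y, Set.mem_insert y S, hyv.symm⟩
  by_cases hxv : G.Adj x v
  · obtain ⟨s, hs, hvs⟩ :=
      exists_adj_of_isMaxIndepOn_exteriorFrontier h4 h5 h6 hL hxy hS₀ hxv hyv hvy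
    exact ⟨s, Set.mem_insert_of_mem y (hsub hs), hvs⟩
  · have hvx : v ≠ x := by rintro rfl; exact hyv hxy.symm
    obtain ⟨s, hs, hvs⟩ :=
      hS.exists_adj ⟨hvx, hvy, hxv, hyv⟩ fun h => hv (Set.mem_insert_of_mem y h)
    exact ⟨s, Set.mem_insert_of_mem y hs, hvs⟩

lemma isRelating_of_adj [Finite V] (h4 : ¬ HasCycleLen G 4) (h5 : ¬ HasCycleLen G 5)
    (h6 : ¬ HasCycleLen G 6) (hL : lSet G = ∅) {x y : V} (hxy : G.Adj x y) :
    IsRelating G x y := by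
  obtain ⟨S₀, -, hS₀⟩ := exists_isMaxIndepOn_superset G (A := exteriorFrontier G x y)
    (Set.empty_subset _) (Set.pairwise_empty _)
  obtain ⟨S, hsub, hS⟩ := exists_isMaxIndepOn_superset G (A := exterior G x y)
    (hS₀.1.trans fun _ hv => hv.1) hS₀.2.1
  have hS₀' : IsMaxIndepOn G (exteriorFrontier G y x) S₀ := exteriorFrontier_comm x y ▸ hS₀
  have hS' : IsMaxIndepOn G (exterior G y x) S := exterior_comm x y ▸ hS
  refine ⟨hxy, S, hS.2.1, ?_, ?_⟩ <;> rw [Set.union_singleton]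
  · exact isMaxIndep_insert_of_isMaxIndepOn_exterior h4 h5 h6 hL hxy.symm hS₀' hS' hsub
  · exact isMaxIndep_insert_of_isMaxIndepOn_exterior h4 h5 h6 hL hxy hS₀ hS hsub

end RelatingEdges

end WC

open WC

/-- in a connected graph with no `C₄`, `C₅`, `C₆`, `L(G) = ∅` and
not well-covered, the only weight function making `G` `w`-well-covered is the
zero function: `WCW(G) = {0}`. -/
theorem stmt_16 {V : Type*} [Fintype V] (G : SimpleGraph V) (hconn : G.Connected)
    (h4 : ¬ HasCycleLen G 4) (h5 : ¬ HasCycleLen G 5) (h6 : ¬ HasCycleLen G 6)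
    (hL : lSet G = ∅) (hnwc : ¬ WellCovered G) :
    {w : V → ℝ | WWC G w} = {0} := by
  ext w
  refine ⟨fun hw => hw.eq_zero_of_forall_isRelating hconn
    (fun _ _ => isRelating_of_adj h4 h5 h6 hL) hnwc, ?_⟩
  rintro rfl S T - -
  simp [wsum]
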